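/- For an odd integer b = 2k+1 with k ≥ 1, the majority map f_b satisfies f_b(u) ≥ u for all u ∈ [0,1], with strict inequality f_b(u) > u for all u ∈ (0,1). -/

import Mathlib

open Finset

/-- The upper binomial tail `F(p) = ∑_{j=k+1}^{2k+1} C(2k+1,j) p^j (1-p)^{2k+1-j}`. -/
noncomputable def majF (k : ℕ) (p : ℝ) : ℝ :=
  ∑ j ∈ Finset.Icc (k + 1) (2 * k + 1),
    (Nat.choose (2 * k + 1) j : ℝ) * p ^ j * (1 - p) ^ (2 * k + 1 - j)

/-- The majority map `f_b(u) = 2 F((1+u)/2) - 1` for odd fan-in `b = 2k+1`. -/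
noncomputable def majMap (k : ℕ) (u : ℝ) : ℝ :=
  2 * majF k ((1 + u) / 2) - 1

/-!
The upper tail `F` is a sum of Bernstein polynomials, whose derivatives telescope to
`F'(p) = (2k+1) C(2k,k) (p(1-p))^k`. Hence `f_b(u) - u` has derivative
`(2k+1) C(2k,k) ((1-u²)/4)^k - 1`, which for `k ≥ 1` is strictly decreasing on `[0,1]`, so
`f_b(u) - u` is strictly concave there. It vanishes at `u = 1`, and at `u = 0` because
`∑_{j>k} C(2k+1,j)` is half of `2^(2k+1)`; so it is positive in between.
-/

open Polynomial

theorem bernsteinPolynomial.derivative_sum_Ioc (R : Type*) [CommRing R] (n : ℕ) {m l : ℕ}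
    (hml : m ≤ l) :
    derivative (∑ ν ∈ Ioc m l, bernsteinPolynomial R n ν) =
      n * (bernsteinPolynomial R (n - 1) m - bernsteinPolynomial R (n - 1) l) := by
  induction l, hml using Nat.le_induction with
  | base => simp
  | succ l hml ih =>
    rw [sum_Ioc_succ_top hml, derivative_add, ih, derivative_succ]
    ring

lemma majF_eq_eval (k : ℕ) (p : ℝ) :
    majF k p = (∑ j ∈ Ioc k (2 * k + 1), bernsteinPolynomial ℝ (2 * k + 1) j).eval p := by
  simp [majF, eval_finsetSum, bernsteinPolynomial, ← Icc_add_one_left_eq_Ioc]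

lemma hasDerivAt_majF (k : ℕ) (p : ℝ) :
    HasDerivAt (majF k) ((2 * k + 1) * (2 * k).choose k * (p * (1 - p)) ^ k) p := by
  rw [funext (majF_eq_eval k)]
  refine (∑ j ∈ Ioc k (2 * k + 1), bernsteinPolynomial ℝ (2 * k + 1) j).hasDerivAt p
    |>.congr_deriv ?_
  rw [bernsteinPolynomial.derivative_sum_Ioc ℝ _ (by omega),
    bernsteinPolynomial.eq_zero_of_lt ℝ (by omega : 2 * k + 1 - 1 < 2 * k + 1)]
  simp [bernsteinPolynomial, show 2 * k - k = k by omega, mul_pow]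
  ring

lemma Nat.sum_Ioc_choose_halfway (k : ℕ) :
    ∑ j ∈ Ioc k (2 * k + 1), (2 * k + 1).choose j = 4 ^ k := by
  have h := Nat.sum_range_choose (2 * k + 1)
  rw [range_eq_Ico,
    ← sum_Ico_consecutive _ (Nat.zero_le (k + 1)) (by omega : k + 1 ≤ 2 * k + 1 + 1),
    ← range_eq_Ico, Nat.sum_range_choose_halfway, Ico_add_one_add_one_eq_Ioc, pow_succ,
    pow_mul] at h
  norm_num at h
  omega

lemma majMap_zero (k : ℕ) : majMap k 0 = 0 := by
  have hterm : ∀ j ∈ Icc (k + 1) (2 * k + 1), ((2 * k + 1).choose j : ℝ) * (1 / 2) ^ j *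
      (1 - 1 / 2) ^ (2 * k + 1 - j) = (2 * k + 1).choose j * (1 / 2) ^ (2 * k + 1) := by
    intro j hj
    rw [mul_assoc, (by norm_num : (1 : ℝ) - 1 / 2 = 1 / 2), ← pow_add,
      Nat.add_sub_cancel' (mem_Icc.1 hj).2]
  rw [majMap, majF, add_zero, sum_congr rfl hterm, ← sum_mul, Icc_add_one_left_eq_Ioc,
    ← Nat.cast_sum, Nat.sum_Ioc_choose_halfway, pow_succ, pow_mul]
  push_cast
  rw [← mul_assoc ((4 : ℝ) ^ k), ← mul_pow]
  norm_num

lemma majMap_one (k : ℕ) : majMap k 1 = 1 := by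
  rw [majMap, majF_eq_eval]
  simp [eval_finsetSum, bernsteinPolynomial.eval_at_1, show k ≤ 2 * k by omega]
  norm_num

lemma hasDerivAt_majMap (k : ℕ) (u : ℝ) :
    HasDerivAt (majMap k) ((2 * k + 1) * (2 * k).choose k * ((1 - u ^ 2) / 4) ^ k) u := by
  have hp : HasDerivAt (fun u : ℝ => (1 + u) / 2) (1 / 2) u := by
    simpa using ((hasDerivAt_id u).const_add 1).div_const 2
  refine (((hasDerivAt_majF k _).comp u hp).const_mul 2).sub_const 1 |>.congr_deriv ?_
  ring

lemma strictConcaveOn_majMap_sub_id {k : ℕ} (hk : k ≠ 0) :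
    StrictConcaveOn ℝ (Set.Icc 0 1) (fun u => majMap k u - u) := by
  have hderiv (u : ℝ) := (hasDerivAt_majMap k u).fun_sub (hasDerivAt_id' u)
  refine StrictAntiOn.strictConcaveOn_of_deriv (convex_Icc 0 1)
    (fun u _ => (hderiv u).continuousAt.continuousWithinAt) ?_
  rw [interior_Icc]
  rintro u ⟨hu0, -⟩ v ⟨-, hv1⟩ huv
  have hc : (0 : ℝ) < (2 * k).choose k := by exact_mod_cast Nat.choose_pos (by omega)
  rw [(hderiv u).deriv, (hderiv v).deriv]
  gcongr
  nlinarith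

/-- Majority improves independent votes: `f_b(u) ≥ u` on `[0,1]`, strictly on `(0,1)`. -/
theorem majMap_ge_id (k : ℕ) (hk : 1 ≤ k) :
    (∀ u ∈ Set.Icc (0 : ℝ) 1, u ≤ majMap k u) ∧
    (∀ u ∈ Set.Ioo (0 : ℝ) 1, u < majMap k u) := by
  have hg := strictConcaveOn_majMap_sub_id (Nat.one_le_iff_ne_zero.mp hk)
  have hends : min (majMap k 0 - 0) (majMap k 1 - 1) = 0 := by simp [majMap_zero, majMap_one]
  have h0 : (0 : ℝ) ∈ Set.Icc 0 1 := Set.left_mem_Icc.2 zero_le_one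
  have h1 : (1 : ℝ) ∈ Set.Icc 0 1 := Set.right_mem_Icc.2 zero_le_one
  constructor
  · intro u hu
    rw [← segment_eq_Icc zero_le_one] at hu
    have := hg.concaveOn.ge_on_segment h0 h1 hu
    linarith
  · intro u hu
    rw [← openSegment_eq_Ioo zero_lt_one] at hu
    have := hg.lt_on_openSegment h0 h1 zero_ne_one hu
    linarith
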